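/- arXiv:math/0002139 — 6 statements merged into one kernel-verified Lean document; each statement's English description precedes it below -/
import Mathlib

section
/- (Divergence principle.) Fix an integer m ≥ 2, reals δ > 0 and η > 1 − δ, and a nonnegative admissible test function f on ℝ^m with f(0, …, 0) > 0. Then there exist c > 0 and Q such that: for every integer q ≥ Q admitting a factorization q = u v² with integers u ≥ 1 and v > q^δ, every integer N ≥ 1 with (log N)/(log q) > η, and every integer b, one has R^(m)(N, b/q, f) ≥ c · f(0,…,0) · (N v/q)^m / N. -/
open MeasureTheory Filter

/-- The list of the fractional parts of `x 1, …, x N`, sorted in increasing order. -/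
noncomputable def sortedFracParts (N : ℕ) (x : ℕ → ℝ) : List ℝ :=
  ((Finset.Icc 1 N).val.map fun n => Int.fract (x n)).sort (· ≤ ·)

/-- `nthBeta N x j` is `β_j`, the `j`-th smallest (1-indexed) among the fractional
parts of `x n`, `1 ≤ n ≤ N`. -/
noncomputable def nthBeta (N : ℕ) (x : ℕ → ℝ) (j : ℕ) : ℝ :=
  (sortedFracParts N x).getD (j - 1) 0

/-- An admissible test function on `ℝ^m`: symmetric under permutations of the
coordinates, invariant under translations along the diagonal, and compactly
supported modulo the diagonal. -/
def IsAdmissible {m : ℕ} (f : (Fin m → ℝ) → ℝ) : Prop :=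
  (∀ (σ : Equiv.Perm (Fin m)) (x : Fin m → ℝ), f (x ∘ σ) = f x) ∧
  (∀ (x : Fin m → ℝ) (t : ℝ), (f fun i => x i + t) = f x) ∧
  ∃ C : ℝ, ∀ x : Fin m → ℝ, f x ≠ 0 → ∀ i j, |x i - x j| ≤ C

open Classical in
/-- The `m`-level correlation `R^(m)(N, x, f)` of the fractional parts of the
sequence `x 1, …, x N`. -/
noncomputable def corr (m N : ℕ) (x : ℕ → ℝ) (f : (Fin m → ℝ) → ℝ) : ℝ :=
  (N : ℝ)⁻¹ * ∑ j ∈ Finset.univ.filter (fun j : Fin m → Fin N => StrictMono j),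
      f fun i => N * nthBeta N x ((j i : ℕ) + 1)

/-- `∫_{0 ≤ x₂ ≤ ⋯ ≤ x_{m+1}} f(0, x₂, …, x_{m+1}) dx₂ ⋯ dx_{m+1}`. -/
noncomputable def poissonValue (m : ℕ) (f : (Fin (m + 1) → ℝ) → ℝ) : ℝ :=
  ∫ y in {y : Fin m → ℝ | (∀ i, 0 ≤ y i) ∧ Monotone y}, f (Fin.cons 0 y)

/-! If `q = u v²`, every multiple `n` of `u v` has `b n² / q ∈ ℤ`, so at least
`K = ⌊N / (u v)⌋ > N v / q - 1` of the fractional parts vanish; these are the `K` smallest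
`β_j`. Each of the `binom(K, m)` increasing `m`-tuples of such indices contributes `f(0)` to
the correlation sum, and `N v / q > q ^ (η + δ - 1) → ∞` gives `binom(K, m) ≫ (N v / q) ^ m`. -/
open Finset
open scoped Nat

theorem List.getElem_eq_of_lt_count {α : Type*} [LinearOrder α] {l : List α} {a : α}
    (hl : l.Pairwise (· ≤ ·)) (ha : ∀ y ∈ l, a ≤ y) {j : ℕ} (hj : j < l.count a) :
    l[j]'(hj.trans_le List.count_le_length) = a := by
  have hjl : j < l.length := hj.trans_le List.count_le_length
  by_contra hne
  have hlt : a < l[j] := (ha _ (List.getElem_mem _)).lt_of_ne' hne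
  have hdrop : (l.drop j).count a = 0 := by
    have hsorted := hl.drop (i := j)
    rw [List.drop_eq_getElem_cons hjl, List.pairwise_cons] at hsorted
    rw [List.drop_eq_getElem_cons hjl, List.count_eq_zero]
    rintro (_ | ⟨_, hmem⟩)
    · exact hne rfl
    · exact (hsorted.1 a hmem).not_gt hlt
  have htake : (l.take j).count a ≤ j :=
    List.count_le_length.trans (List.length_take_le _ _)
  have hsplit := List.count_append (a := a) (l₁ := l.take j) (l₂ := l.drop j)
  rw [List.take_append_drop] at hsplit
  omega

theorem count_zero_sortedFracParts (N : ℕ) (x : ℕ → ℝ) :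
    (sortedFracParts N x).count 0 = #{n ∈ Icc 1 N | Int.fract (x n) = 0} := by
  rw [← Multiset.coe_count, sortedFracParts, Multiset.sort_eq, Multiset.count_map,
    card_def, filter_val]
  simp only [eq_comm]

theorem nthBeta_eq_zero_of_lt_card {N : ℕ} {x : ℕ → ℝ} {j : ℕ}
    (hj : j < #{n ∈ Icc 1 N | Int.fract (x n) = 0}) : nthBeta N x (j + 1) = 0 := by
  rw [← count_zero_sortedFracParts] at hj
  rw [nthBeta, Nat.add_sub_cancel, List.getD_eq_getElem _ _ (hj.trans_le List.count_le_length)]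
  refine List.getElem_eq_of_lt_count (Multiset.pairwise_sort _ _) (fun y hy => ?_) hj
  simp only [Multiset.mem_sort, Multiset.mem_map] at hy
  obtain ⟨n, -, rfl⟩ := hy
  exact Int.fract_nonneg _

theorem div_le_card_fract_mul_sq_div_eq_zero (N u v b : ℕ) :
    N / (u * v) ≤
      #{n ∈ Icc 1 N | Int.fract ((b : ℝ) * ((n : ℕ) : ℝ) ^ 2 / (u * v ^ 2 : ℕ)) = 0} := by
  rw [← Nat.Ioc_filter_dvd_card_eq_div, ← Icc_add_one_left_eq_Ioc]
  refine card_le_card (monotone_filter_right _ fun n _ hn => ?_)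
  obtain ⟨k, rfl⟩ := hn
  rcases eq_or_ne (u * v) 0 with huv | huv
  · simp [huv]
  obtain ⟨hu, hv⟩ := mul_ne_zero_iff.mp huv
  have hint : (b : ℝ) * ((u * v * k : ℕ) : ℝ) ^ 2 / (u * v ^ 2 : ℕ) = (b * u * k ^ 2 : ℕ) := by
    rw [div_eq_iff (Nat.cast_ne_zero.mpr (mul_ne_zero hu (pow_ne_zero 2 hv)))]
    push_cast
    ring
  rw [hint, Int.fract_natCast]

open Classical in
theorem choose_card_le_card_strictMono {α : Type*} [LinearOrder α] [Fintype α]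
    (s : Finset α) (m : ℕ) :
    (#s).choose m ≤ #{j : Fin m → α | StrictMono j ∧ ∀ i, j i ∈ s} := by
  rw [← card_powersetCard]
  refine card_le_card_of_surjOn (fun j => univ.image j) fun t ht => ?_
  obtain ⟨hts, hcard⟩ := mem_powersetCard.mp ht
  refine ⟨t.orderEmbOfFin hcard, ?_, image_orderEmbOfFin_univ t hcard⟩
  simp only [coe_filter, Set.mem_ofPred_eq, mem_univ, true_and]
  exact ⟨(t.orderEmbOfFin hcard).strictMono, fun i => hts (t.orderEmbOfFin_mem hcard i)⟩

theorem choose_mul_le_corr {m N K : ℕ} {x : ℕ → ℝ} {f : (Fin m → ℝ) → ℝ}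
    (hf : ∀ y, 0 ≤ f y) (hK : K ≤ N) (hzero : ∀ j < K, nthBeta N x (j + 1) = 0) :
    (N : ℝ)⁻¹ * (K.choose m * f 0) ≤ corr m N x f := by
  classical
  set s : Finset (Fin N) := {i | (i : ℕ) < K}
  have hs : #s = K := by rw [Fin.card_filter_val_lt, min_eq_right hK]
  set T : Finset (Fin m → Fin N) := {j : Fin m → Fin N | StrictMono j ∧ ∀ i, j i ∈ s}
  have hT : ∀ j ∈ T, (f fun i => N * nthBeta N x ((j i : ℕ) + 1)) = f 0 := by
    intro j hj
    simp only [T, s, mem_filter, mem_univ, true_and] at hj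
    congr 1
    funext i
    rw [hzero _ (hj.2 i), mul_zero, Pi.zero_apply]
  rw [corr]
  gcongr
  calc (K.choose m : ℝ) * f 0 ≤ #T * f 0 := by
        gcongr
        · exact hf 0
        · exact hs ▸ choose_card_le_card_strictMono s m
    _ = ∑ j ∈ T, f fun i => N * nthBeta N x ((j i : ℕ) + 1) := by
        rw [sum_congr rfl hT, sum_const, nsmul_eq_mul]
    _ ≤ _ := sum_le_sum_of_subset_of_nonneg (monotone_filter_right _ fun j _ hj => hj.1)
        fun _ _ _ => hf _

theorem Real.rpow_add_sub_one_lt_mul_div {q N v δ η : ℝ} (hq : 1 < q) (hN : 0 < N)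
    (hv : q ^ δ < v) (hη : η < Real.log N / Real.log q) : q ^ (η + δ - 1) < N * v / q := by
  have hq0 : 0 < q := one_pos.trans hq
  have hqη : q ^ η < N :=
    (Real.rpow_lt_iff_lt_log hq0 hN).mpr ((lt_div_iff₀ (Real.log_pos hq)).mp hη)
  rw [Real.rpow_sub hq0, Real.rpow_add hq0, Real.rpow_one]
  gcongr

theorem Nat.cast_div_lt_div_add_one (N n : ℕ) : (N : ℝ) / n < (N / n : ℕ) + 1 := by
  simpa only [Nat.floor_div_eq_div] using Nat.lt_floor_add_one ((N : ℝ) / n)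

theorem pow_div_factorial_le_choose {y : ℝ} (hy : 0 ≤ y) {K m : ℕ}
    (hyK : y ≤ K + 1 - m) : y ^ m / m ! ≤ K.choose m := by
  have hmK : m ≤ K + 1 := by exact_mod_cast (show (m : ℝ) ≤ K + 1 by linarith)
  rw [div_le_iff₀ (by positivity), mul_comm, ← Nat.cast_mul,
    ← Nat.descFactorial_eq_factorial_mul_choose]
  calc y ^ m ≤ ((K + 1 - m : ℕ) : ℝ) ^ m := by
        gcongr
        rwa [Nat.cast_sub hmK, Nat.cast_add_one]
    _ ≤ K.descFactorial m := by exact_mod_cast Nat.pow_sub_le_descFactorial K m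

theorem divergence_principle_general
    (m : ℕ) (δ η : ℝ) (hη : 1 - δ < η)
    (f : (Fin m → ℝ) → ℝ) (hnonneg : ∀ x, 0 ≤ f x) :
    ∃ c : ℝ, 0 < c ∧ ∃ Q : ℕ, ∀ q : ℕ, Q ≤ q →
      ∀ u v : ℕ, 1 ≤ u → q = u * v ^ 2 → (q : ℝ) ^ δ < (v : ℝ) →
        ∀ N : ℕ, 1 ≤ N → η < Real.log N / Real.log q →
          ∀ b : ℕ, 1 ≤ b →
            c * f (fun _ => 0) * (((N : ℝ) * (v : ℝ)) / (q : ℝ)) ^ m / (N : ℝ)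
              ≤ corr m N (fun n => (b : ℝ) * (n : ℝ) ^ 2 / (q : ℝ)) f := by
  have hgrowth : Tendsto (fun q : ℕ => (q : ℝ) ^ (η + δ - 1)) atTop atTop :=
    (tendsto_rpow_atTop (by linarith)).comp tendsto_natCast_atTop_atTop
  obtain ⟨Q, hQ⟩ := eventually_atTop.mp
    ((hgrowth.eventually_ge_atTop (2 * m)).and (eventually_gt_atTop 1))
  refine ⟨((2 : ℝ) ^ m * m !)⁻¹, by positivity, Q, fun q hq u v _ hquv hv N hN hlogN b _ => ?_⟩
  obtain ⟨hqε, hq1⟩ := hQ q hq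
  obtain ⟨hu0, hv0⟩ : u ≠ 0 ∧ v ≠ 0 := by simpa [hquv] using (show q ≠ 0 by omega)
  set X : ℝ := N * v / q
  have hX : 2 * m ≤ X := hqε.trans
    (Real.rpow_add_sub_one_lt_mul_div (by exact_mod_cast hq1) (Nat.cast_pos.mpr hN) hv hlogN).le
  have hXK : X < (N / (u * v) : ℕ) + 1 := by
    convert Nat.cast_div_lt_div_add_one N (u * v) using 1
    simp only [X, hquv]
    push_cast
    field_simp
  subst hquv
  calc ((2 : ℝ) ^ m * m !)⁻¹ * f (fun _ => 0) * X ^ m / N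
      = (N : ℝ)⁻¹ * ((X / 2) ^ m / m ! * f (fun _ => 0)) := by
        rw [div_pow X]
        ring
    _ ≤ (N : ℝ)⁻¹ * ((N / (u * v)).choose m * f (fun _ => 0)) := by
        gcongr
        · exact hnonneg 0
        · exact pow_div_factorial_le_choose (by linarith) (by linarith)
    _ ≤ _ := choose_mul_le_corr hnonneg (Nat.div_le_self _ _) fun j hj =>
        nthBeta_eq_zero_of_lt_card (hj.trans_le (div_le_card_fract_mul_sq_div_eq_zero N u v b))

/-- **Divergence principle.** Let `m ≥ 2`, `δ > 0`, `η > 1 - δ`, and let `f ≥ 0` be an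
admissible test function with `f(0) > 0`.  If `q = u v²` with `v > q^δ` and
`log N / log q > η`, then for all `b`, `R^(m)(N, b/q, f) ≫ f(0) (N v / q)^m / N`. -/
theorem divergence_principle
    (m : ℕ) (hm : 2 ≤ m) (δ η : ℝ) (hδ : 0 < δ) (hη : 1 - δ < η)
    (f : (Fin m → ℝ) → ℝ) (hf : IsAdmissible f) (hnonneg : ∀ x, 0 ≤ f x)
    (h0 : 0 < f (fun _ => 0)) :
    ∃ c : ℝ, 0 < c ∧ ∃ Q : ℕ, ∀ q : ℕ, Q ≤ q →
      ∀ u v : ℕ, 1 ≤ u → q = u * v ^ 2 → (q : ℝ) ^ δ < (v : ℝ) →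
        ∀ N : ℕ, 1 ≤ N → η < Real.log N / Real.log q →
          ∀ b : ℕ, 1 ≤ b →
            c * f (fun _ => 0) * (((N : ℝ) * (v : ℝ)) / (q : ℝ)) ^ m / (N : ℝ)
              ≤ corr m N (fun n => (b : ℝ) * (n : ℝ) ^ 2 / (q : ℝ)) f :=
  divergence_principle_general m δ η hη f hnonneg
end

section
/- For Lebesgue-almost every real number α there exists Q > 1 such that: whenever a and q are integers with gcd(a, q) = 1, q ≥ Q, and |α − a/q| < 1/q², then writing q = q̃ s² with q̃ square-free and s a positive integer, one has s ≤ (log q̃)². -/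
open MeasureTheory Filter
open scoped Classical


private lemma aux_summable :
    Summable (fun p : ℕ × ℕ =>
      if Squarefree p.2 ∧ (Real.log p.2) ^ 2 < (p.1 : ℝ) then ((p.2 : ℝ) * (p.1 : ℝ) ^ 2)⁻¹
      else 0) := by
  set g : ℕ × ℕ → ℝ := fun p =>
    if Squarefree p.2 ∧ (Real.log p.2) ^ 2 < (p.1 : ℝ) then ((p.2 : ℝ) * (p.1 : ℝ) ^ 2)⁻¹
    else 0 with hg
  have hnn : ∀ p, 0 ≤ g p := by
    intro p; rw [hg]; dsimp only; split
    · positivity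
    · exact le_rfl
  have hsupp : ∀ s t : ℕ, g (s, t) ≠ 0 → t ≤ ⌈Real.exp (Real.sqrt s)⌉₊ := by
    intro s t h
    rw [hg] at h; dsimp only at h
    by_cases hc : Squarefree t ∧ (Real.log t) ^ 2 < (s : ℝ)
    · obtain ⟨hsf, hlt⟩ := hc
      have ht1 : 1 ≤ t := Nat.one_le_iff_ne_zero.mpr hsf.ne_zero
      have hlog : 0 ≤ Real.log t := Real.log_nonneg (by exact_mod_cast ht1)
      have h2 : Real.log t ≤ Real.sqrt s := by
        nlinarith [Real.sq_sqrt (show (0:ℝ) ≤ (s:ℝ) by positivity),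
          Real.sqrt_nonneg (s:ℝ), sq_nonneg (Real.log t - Real.sqrt s)]
      have h3 : (t : ℝ) ≤ Real.exp (Real.sqrt s) := by
        calc (t : ℝ) = Real.exp (Real.log t) := (Real.exp_log (by positivity)).symm
        _ ≤ Real.exp (Real.sqrt s) := Real.exp_le_exp.mpr h2
      exact_mod_cast h3.trans (Nat.le_ceil _)
    · exact absurd (if_neg hc) h
  have hnn2 : ∀ p : ℕ × ℕ, 0 ≤ (fun p : ℕ × ℕ => g p) p := hnn
  rw [summable_prod_of_nonneg hnn2]
  constructor
  · intro s
    apply summable_of_ne_finset_zero (s := Finset.range (⌈Real.exp (Real.sqrt s)⌉₊ + 1))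
    intro t ht
    by_contra h
    exact ht (Finset.mem_range.mpr (Nat.lt_succ_of_le (hsupp s t h)))
  · -- outer sum
    have hb : ∀ s : ℕ, ∑' t, g (s, t) ≤ 3 * Real.sqrt s * (((s : ℝ)) ^ 2)⁻¹ := by
      intro s
      rcases Nat.eq_zero_or_pos s with hs0 | hs1
      · subst hs0
        have : ∀ t, g (0, t) = 0 := by
          intro t; rw [hg]; dsimp only
          rw [if_neg]
          rintro ⟨-, hlt⟩
          simp only [Nat.cast_zero] at hlt
          nlinarith [sq_nonneg (Real.log t)]
        simp [this]
      · set M := ⌈Real.exp (Real.sqrt s)⌉₊ with hM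
        have hts : ∑' t, g (s, t) = ∑ t ∈ Finset.range (M + 1), g (s, t) := by
          apply tsum_eq_sum
          intro t ht
          by_contra h
          exact ht (Finset.mem_range.mpr (Nat.lt_succ_of_le (hsupp s t h)))
        rw [hts]
        have hstep : ∑ t ∈ Finset.range (M + 1), g (s, t)
            ≤ ∑ t ∈ Finset.range (M + 1),
              (if t = 0 then 0 else ((t : ℝ) * (s : ℝ) ^ 2)⁻¹) := by
          apply Finset.sum_le_sum
          intro t _
          rw [hg]; dsimp only
          split
          · rename_i hc
            rw [if_neg hc.1.ne_zero]
          · split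
            · exact le_rfl
            · positivity
        have hharm : ∑ t ∈ Finset.range (M + 1),
            (if t = 0 then 0 else ((t : ℝ) * (s : ℝ) ^ 2)⁻¹)
            = ((s : ℝ) ^ 2)⁻¹ * (harmonic M : ℝ) := by
          rw [Finset.sum_range_succ', if_pos rfl, add_zero, harmonic]
          push_cast
          rw [Finset.mul_sum]
          refine Finset.sum_congr rfl fun i _ => ?_
          rw [mul_inv]
          ring
        rw [hharm] at hstep
        refine hstep.trans ?_
        have hlogM : Real.log M ≤ Real.sqrt s + 1 := by
          have hMle : (M : ℝ) < Real.exp (Real.sqrt s) + 1 :=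
            Nat.ceil_lt_add_one (Real.exp_pos _).le
          have h2 : (M : ℝ) ≤ 2 * Real.exp (Real.sqrt s) := by
            have := Real.one_le_exp (Real.sqrt_nonneg (s : ℝ))
            linarith
          calc Real.log M ≤ Real.log (2 * Real.exp (Real.sqrt s)) := by
                apply Real.log_le_log (by positivity) h2
          _ = Real.log 2 + Real.sqrt s := by
                rw [Real.log_mul (by norm_num) (Real.exp_ne_zero _), Real.log_exp]
          _ ≤ Real.sqrt s + 1 := by
                have := Real.log_le_sub_one_of_pos (show (0:ℝ) < 2 by norm_num)
                linarith
        have hH : (harmonic M : ℝ) ≤ 2 + Real.sqrt s := by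
          calc (harmonic M : ℝ) ≤ 1 + Real.log M := harmonic_le_one_add_log M
          _ ≤ 2 + Real.sqrt s := by linarith
        have hs1' : (1 : ℝ) ≤ Real.sqrt s := by
          rw [show (1:ℝ) = Real.sqrt 1 by simp]
          exact Real.sqrt_le_sqrt (by exact_mod_cast hs1)
        have : (harmonic M : ℝ) ≤ 3 * Real.sqrt s := by linarith
        calc ((s : ℝ) ^ 2)⁻¹ * (harmonic M : ℝ) ≤ ((s : ℝ) ^ 2)⁻¹ * (3 * Real.sqrt s) := by
              apply mul_le_mul_of_nonneg_left this (by positivity)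
        _ = 3 * Real.sqrt s * (((s : ℝ)) ^ 2)⁻¹ := by ring
    apply Summable.of_nonneg_of_le (fun s => tsum_nonneg (fun t => hnn (s, t))) hb
    have heq : ∀ s : ℕ, 3 * Real.sqrt s * (((s : ℝ)) ^ 2)⁻¹ = 3 * (1 / (s : ℝ) ^ ((3:ℝ)/2)) := by
      intro s
      rcases Nat.eq_zero_or_pos s with h | h
      · subst h; simp [Real.zero_rpow (by norm_num : ((3:ℝ)/2) ≠ 0)]
      · have hs : (0 : ℝ) < s := by exact_mod_cast h
        have h2 : ((s:ℝ)^2)⁻¹ = (s:ℝ) ^ (-2 : ℝ) := by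
          rw [← Real.rpow_natCast (s:ℝ) 2, ← Real.rpow_neg hs.le]
          norm_num
        have h3 : Real.sqrt (s:ℝ) = (s:ℝ) ^ ((1:ℝ)/2) := Real.sqrt_eq_rpow _
        rw [h2, h3, mul_assoc, ← Real.rpow_add hs,
          show (1:ℝ)/2 + (-2) = -(3/2) by norm_num, Real.rpow_neg hs.le]
        norm_num
    simp_rw [heq]
    exact (Real.summable_one_div_nat_rpow.mpr (by norm_num)).mul_left 3

private lemma aux_tsum_ne_top :
    (∑' q : ℕ, (if ∃ t s : ℕ, Squarefree t ∧ 0 < s ∧ q = t * s ^ 2 ∧ (Real.log t) ^ 2 < (s : ℝ)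
      then ENNReal.ofReal ((q : ℝ)⁻¹) else 0)) ≠ ⊤ := by
  classical
  set g : ℕ × ℕ → ℝ := fun p =>
    if Squarefree p.2 ∧ (Real.log p.2) ^ 2 < (p.1 : ℝ) then ((p.2 : ℝ) * (p.1 : ℝ) ^ 2)⁻¹
    else 0 with hg
  have hgnn : ∀ p, 0 ≤ g p := by
    intro p; rw [hg]; dsimp only; split
    · positivity
    · exact le_rfl
  set S : Set ℕ := {q | ∃ t s : ℕ, Squarefree t ∧ 0 < s ∧ q = t * s ^ 2 ∧
    (Real.log t) ^ 2 < (s : ℝ)} with hS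
  have h1 : (fun q : ℕ => (if ∃ t s : ℕ, Squarefree t ∧ 0 < s ∧ q = t * s ^ 2 ∧
        (Real.log t) ^ 2 < (s : ℝ) then ENNReal.ofReal ((q : ℝ)⁻¹) else 0))
      = S.indicator (fun q => ENNReal.ofReal ((q : ℝ)⁻¹)) := by
    funext q
    rw [Set.indicator_apply]
    rfl
  rw [h1, ← tsum_subtype]
  have hch : ∀ q : S, ∃ p : ℕ × ℕ, Squarefree p.2 ∧ 0 < p.1 ∧ (q : ℕ) = p.2 * p.1 ^ 2 ∧
      (Real.log p.2) ^ 2 < (p.1 : ℝ) := by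
    rintro ⟨q, t, s, h1, h2, h3, h4⟩
    exact ⟨(s, t), h1, h2, h3, h4⟩
  choose i hsf hpos heq hlt using hch
  have hinj : Function.Injective i := by
    intro q q' h
    apply Subtype.ext
    rw [heq q, heq q', h]
  have hcomp : ∀ q : S, ENNReal.ofReal (((q : ℕ) : ℝ)⁻¹) = ENNReal.ofReal (g (i q)) := by
    intro q
    rw [hg]
    dsimp only
    rw [if_pos ⟨hsf q, hlt q⟩, heq q]
    push_cast
    rfl
  have hle : ∑' q : S, ENNReal.ofReal (((q : ℕ) : ℝ)⁻¹) ≤ ENNReal.ofReal (∑' p, g p) := by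
    calc ∑' q : S, ENNReal.ofReal (((q : ℕ) : ℝ)⁻¹)
        = ∑' q : S, ENNReal.ofReal (g (i q)) := by simp_rw [hcomp]
      _ ≤ ∑' p : ℕ × ℕ, ENNReal.ofReal (g p) :=
          ENNReal.tsum_comp_le_tsum_of_injective hinj _
      _ = ENNReal.ofReal (∑' p, g p) := (ENNReal.ofReal_tsum_of_nonneg hgnn aux_summable).symm
  exact ne_top_of_le_ne_top ENNReal.ofReal_ne_top hle

/-- **Proposition A.1.** For almost all real `α` there is `Q > 1` such that every rational
approximation `a/q` of `α` with `gcd(a,q) = 1`, `q ≥ Q` and `|α - a/q| < 1/q²` has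
denominator `q = q̃ s²` (with `q̃` square-free) satisfying `s ≤ (log q̃)²`. -/
theorem ae_approximants_almost_squarefree :
    ∀ᵐ α : ℝ ∂volume, ∃ Q : ℕ, 1 < Q ∧
      ∀ (a : ℤ) (q : ℕ), Q ≤ q → Int.gcd a q = 1 →
        |α - (a : ℝ) / (q : ℝ)| < 1 / (q : ℝ) ^ 2 →
        ∀ qt s : ℕ, Squarefree qt → 0 < s → q = qt * s ^ 2 →
          (s : ℝ) ≤ (Real.log qt) ^ 2 := by
  classical
  set Bad : ℕ → Prop := fun q =>
    ∃ t s : ℕ, Squarefree t ∧ 0 < s ∧ q = t * s ^ 2 ∧ (Real.log t) ^ 2 < (s : ℝ) with hBad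
  set E : ℕ → ℕ → Set ℝ := fun N q =>
    if Bad q then
      ⋃ a ∈ Finset.Icc (-(((N : ℤ) + 1) * q)) (((N : ℤ) + 1) * q),
        Metric.ball ((a : ℝ) / q) (1 / (q : ℝ) ^ 2)
    else ∅ with hE
  have hq_pos : ∀ q, Bad q → 1 ≤ q := by
    rintro q ⟨t, s, h1, h2, h3, -⟩
    have ht : 1 ≤ t := Nat.one_le_iff_ne_zero.mpr h1.ne_zero
    rw [h3]
    exact Nat.one_le_iff_ne_zero.mpr (by positivity)
  have key : ∀ N : ℕ, ∀ᵐ α : ℝ ∂volume, ∀ᶠ q : ℕ in atTop, α ∉ E N q := by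
    intro N
    apply ae_eventually_notMem
    have hμ : ∀ q : ℕ, volume (E N q) ≤ ENNReal.ofReal (4 * N + 6) *
        (if Bad q then ENNReal.ofReal ((q : ℝ)⁻¹) else 0) := by
      intro q
      rw [hE]
      dsimp only
      by_cases hb : Bad q
      · rw [if_pos hb, if_pos hb]
        have hq1 : 1 ≤ q := hq_pos q hb
        have hqR : (1 : ℝ) ≤ q := by exact_mod_cast hq1
        have hqR0 : (0 : ℝ) < q := by linarith
        set F := Finset.Icc (-(((N : ℤ) + 1) * q)) (((N : ℤ) + 1) * q) with hF
        have hcard : F.card = 2 * (N + 1) * q + 1 := by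
          rw [hF, Int.card_Icc,
            show ((N : ℤ) + 1) * q + 1 - -(((N : ℤ) + 1) * q)
              = ((2 * (N + 1) * q + 1 : ℕ) : ℤ) by push_cast; ring]
          exact Int.toNat_natCast _
        calc volume (⋃ a ∈ F, Metric.ball ((a : ℝ) / q) (1 / (q : ℝ) ^ 2))
            ≤ ∑ a ∈ F, volume (Metric.ball ((a : ℝ) / q) (1 / (q : ℝ) ^ 2)) :=
              measure_biUnion_finset_le F _
          _ = F.card * ENNReal.ofReal (2 * (1 / (q : ℝ) ^ 2)) := by
              simp [Real.volume_ball, Finset.sum_const, nsmul_eq_mul]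
          _ ≤ ENNReal.ofReal (4 * N + 6) * ENNReal.ofReal ((q : ℝ)⁻¹) := by
              rw [hcard, ← ENNReal.ofReal_natCast (2 * (N + 1) * q + 1),
                ← ENNReal.ofReal_mul (by positivity), ← ENNReal.ofReal_mul (by positivity)]
              apply ENNReal.ofReal_le_ofReal
              have : ((2 * (N + 1) * q + 1 : ℕ) : ℝ) = 2 * ((N : ℝ) + 1) * q + 1 := by
                push_cast; ring
              rw [this]
              set x : ℝ := ((q : ℝ))⁻¹ with hx
              have hinv : x * q = 1 := inv_mul_cancel₀ (by positivity)
              have h2 : (1 : ℝ) / (q : ℝ) ^ 2 = x ^ 2 := by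
                rw [one_div, ← inv_pow]
              rw [h2]
              have hx0 : 0 ≤ x := by positivity
              have hx1 : x ≤ 1 := by nlinarith
              have e1 : (q : ℝ) * x ^ 2 = x := by
                rw [sq, ← mul_assoc, mul_comm (q : ℝ) x, hinv, one_mul]
              have e2 : x ^ 2 ≤ x := by nlinarith
              have e3 : (N : ℝ) * ((q : ℝ) * x ^ 2) = N * x := by rw [e1]
              nlinarith [e1, e2, e3]
      · rw [if_neg hb, if_neg hb]
        simp
    apply ne_top_of_le_ne_top (b := ENNReal.ofReal (4 * N + 6) *
      ∑' q : ℕ, (if Bad q then ENNReal.ofReal ((q : ℝ)⁻¹) else 0))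
    · exact ENNReal.mul_ne_top ENNReal.ofReal_ne_top aux_tsum_ne_top
    · rw [← ENNReal.tsum_mul_left]
      exact ENNReal.tsum_le_tsum hμ
  rw [← ae_all_iff] at key
  filter_upwards [key] with α hα
  set N := ⌈|α|⌉₊ with hN
  obtain ⟨Q₀, hQ₀⟩ := eventually_atTop.mp (hα N)
  refine ⟨max Q₀ 2, lt_of_lt_of_le one_lt_two (le_max_right _ _), ?_⟩
  intro a q hq hgcd happ qt sv hsf hsv hdec
  by_contra hcon
  push_neg at hcon
  have hb : Bad q := ⟨qt, sv, hsf, hsv, hdec, hcon⟩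
  have hq2 : 2 ≤ q := le_trans (le_max_right _ _) hq
  have hqR : (2 : ℝ) ≤ q := by exact_mod_cast hq2
  have hqR0 : (0 : ℝ) < q := by linarith
  apply hQ₀ q (le_trans (le_max_left _ _) hq)
  rw [hE]
  dsimp only
  rw [if_pos hb]
  have hsmall : |α - (a : ℝ) / q| < 1 := by
    apply happ.trans_le
    rw [div_le_one (by positivity)]
    nlinarith
  have habs : |(a : ℝ)| ≤ ((N : ℝ) + 1) * q := by
    have h1 : |(a : ℝ) / q| ≤ |α| + 1 := by
      have := abs_sub_abs_le_abs_sub ((a : ℝ) / q) α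
      rw [abs_sub_comm] at hsmall
      linarith
    have h2 : |α| ≤ N := Nat.le_ceil _
    have h3 : |(a : ℝ)| = |(a : ℝ) / q| * q := by
      rw [abs_div, abs_of_pos hqR0, div_mul_cancel₀ _ (ne_of_gt hqR0)]
    rw [h3]
    apply mul_le_mul_of_nonneg_right _ hqR0.le
    linarith
  have hmem : a ∈ Finset.Icc (-(((N : ℤ) + 1) * q)) (((N : ℤ) + 1) * q) := by
    rw [Finset.mem_Icc, ← abs_le]
    have h4 : ((|a| : ℤ) : ℝ) ≤ ((((N : ℤ) + 1) * q : ℤ) : ℝ) := by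
      rw [Int.cast_abs]
      push_cast
      push_cast at habs
      linarith
    exact_mod_cast h4
  apply Set.mem_biUnion hmem
  rw [Metric.mem_ball, Real.dist_eq]
  exact happ
end

section
/- Let ℱ be the set of positive integers q such that, writing q = q̃ s² with q̃ square-free and s a positive integer, one has s ≤ (log q̃)². Then ∑_{q ∉ ℱ, q ≥ 1} 1/q < ∞. -/
open Real Set

/-- Bertrand-type series: `∑ 1/(a · max 1 (log a)²)` converges. -/
lemma aux_bertrand : Summable (fun a : ℕ => ((a : ℝ) * max 1 (Real.log a ^ 2))⁻¹) := by
  have h_nonneg : ∀ n : ℕ, 0 ≤ ((n : ℝ) * max 1 (Real.log n ^ 2))⁻¹ := by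
    intro n; positivity
  have h_anti : ∀ ⦃m n : ℕ⦄, 0 < m → m ≤ n →
      ((n : ℝ) * max 1 (Real.log n ^ 2))⁻¹ ≤ ((m : ℝ) * max 1 (Real.log m ^ 2))⁻¹ := by
    intro m n hm hmn
    have hm1 : (1 : ℝ) ≤ (m : ℝ) := by exact_mod_cast hm
    have hlm : 0 ≤ Real.log m := Real.log_nonneg hm1
    have hln : Real.log m ≤ Real.log n :=
      Real.log_le_log (by positivity) (by exact_mod_cast hmn)
    have hmax : max 1 (Real.log m ^ 2) ≤ max 1 (Real.log n ^ 2) :=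
      max_le_max le_rfl (by nlinarith)
    have hpos : 0 < (m : ℝ) * max 1 (Real.log m ^ 2) := by positivity
    apply inv_anti₀ hpos
    have : (m : ℝ) ≤ (n : ℝ) := by exact_mod_cast hmn
    have h1 : (0:ℝ) < max 1 (Real.log m ^ 2) := lt_of_lt_of_le one_pos (le_max_left _ _)
    nlinarith [le_max_left (1:ℝ) (Real.log n ^ 2)]
  rw [← summable_condensed_iff_of_nonneg h_nonneg h_anti]
  -- condensed series: 2^k * f(2^k) = (max 1 (k log 2)²)⁻¹
  have hterm : ∀ k : ℕ, (2 : ℝ) ^ k * (((2 ^ k : ℕ) : ℝ) * max 1 (Real.log (2 ^ k : ℕ) ^ 2))⁻¹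
      = (max 1 (((k : ℝ) * Real.log 2) ^ 2))⁻¹ := by
    intro k
    have h2k : ((2 ^ k : ℕ) : ℝ) = (2 : ℝ) ^ k := by push_cast; ring
    have hlog : Real.log ((2 ^ k : ℕ) : ℝ) = (k : ℝ) * Real.log 2 := by
      rw [h2k, Real.log_pow]
    rw [hlog, h2k, mul_inv, ← mul_assoc, mul_inv_cancel₀ (by positivity), one_mul]
  simp only [hterm]
  rw [← summable_nat_add_iff 2]
  have hcmp : Summable (fun k : ℕ => (Real.log 2)⁻¹ ^ 2 * (((k : ℝ) + 1) ^ 2)⁻¹) := by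
    apply Summable.mul_left
    have := (summable_nat_add_iff (f := fun n : ℕ => ((n : ℝ) ^ 2)⁻¹) 1).mpr
      (Real.summable_nat_pow_inv.mpr one_lt_two)
    simpa using this
  apply Summable.of_nonneg_of_le (fun k => by positivity) _ hcmp
  intro k
  have hl2 : (0.6931471803 : ℝ) < Real.log 2 := Real.log_two_gt_d9
  have h1 : (1 : ℝ) ≤ ((k : ℝ) + 2) * Real.log 2 := by nlinarith [Nat.cast_nonneg (α := ℝ) k]
  have hmax : (((k : ℝ) + 1) * Real.log 2) ^ 2 ≤ max 1 ((((k : ℝ) + 2) * Real.log 2) ^ 2) := by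
    refine le_trans ?_ (le_max_right _ _)
    have h0 : (0 : ℝ) ≤ ((k : ℝ) + 1) * Real.log 2 := by nlinarith [Nat.cast_nonneg (α := ℝ) k]
    nlinarith [Nat.cast_nonneg (α := ℝ) k]
  have key : (max 1 (((((k : ℕ) + 2 : ℕ) : ℝ) * Real.log 2) ^ 2))⁻¹
      ≤ (Real.log 2)⁻¹ ^ 2 * (((k : ℝ) + 1) ^ 2)⁻¹ := by
    push_cast
    have heq : (Real.log 2)⁻¹ ^ 2 * (((k : ℝ) + 1) ^ 2)⁻¹
        = ((((k : ℝ) + 1) * Real.log 2) ^ 2)⁻¹ := by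
      have hlp : (0:ℝ) < Real.log 2 := Real.log_pos one_lt_two
      have hkp : (0:ℝ) < (k:ℝ)+1 := by positivity
      field_simp
    rw [heq]
    apply inv_anti₀ (by positivity)
    exact hmax
  exact key

/-- The double series `∑_{a,b, b > (log a)²} 1/(a b²)` converges. -/
lemma aux_double : Summable (fun p : ℕ × ℕ =>
    if (Real.log p.1) ^ 2 < (p.2 : ℝ) then ((p.1 : ℝ) * (p.2 : ℝ) ^ 2)⁻¹ else 0) := by
  set g : ℕ × ℕ → ℝ := fun p =>
    if (Real.log p.1) ^ 2 < (p.2 : ℝ) then ((p.1 : ℝ) * (p.2 : ℝ) ^ 2)⁻¹ else 0 with hg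
  have hg_nonneg : 0 ≤ g := by
    intro p; simp only [hg]; split <;> positivity
  rw [summable_prod_of_nonneg hg_nonneg]
  have hsq : Summable (fun b : ℕ => ((b : ℝ) ^ 2)⁻¹) := Real.summable_nat_pow_inv.mpr one_lt_two
  have hinner : ∀ a : ℕ, Summable fun b => g (a, b) := by
    intro a
    apply Summable.of_nonneg_of_le (fun b => hg_nonneg (a, b)) _ (hsq.mul_left (a : ℝ)⁻¹)
    intro b
    simp only [hg]
    split
    · rw [mul_inv]
    · positivity
  refine ⟨hinner, ?_⟩
  have hBert := aux_bertrand.mul_left 2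
  apply Summable.of_nonneg_of_le _ _ hBert
  · intro a
    exact tsum_nonneg fun b => hg_nonneg (a, b)
  · intro a
    set k : ℕ := ⌊Real.log a ^ 2⌋₊ with hk
    have hcond : ∀ b : ℕ, ((Real.log a) ^ 2 < (b : ℝ)) ↔ k < b := by
      intro b
      rw [hk, ← Nat.floor_lt (by positivity)]
    -- rewrite g (a, b) = a⁻¹ * h b
    have hsplit : ∀ b : ℕ, g (a, b) = (a : ℝ)⁻¹ * (if k < b then ((b : ℝ) ^ 2)⁻¹ else 0) := by
      intro b
      simp only [hg, hcond b]
      split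
      · rw [mul_inv]
      · rw [mul_zero]
    calc ∑' b, g (a, b) = (a : ℝ)⁻¹ * ∑' b, (if k < b then ((b : ℝ) ^ 2)⁻¹ else 0) := by
          rw [← tsum_mul_left]; exact tsum_congr hsplit
      _ ≤ (a : ℝ)⁻¹ * (2 / ((k : ℝ) + 1)) := by
          gcongr
          apply Real.tsum_le_of_sum_range_le (fun n => by positivity)
          intro n
          have : ∑ i ∈ Finset.range n, (if k < i then ((i : ℝ) ^ 2)⁻¹ else 0)
              = ∑ i ∈ Finset.Ioo k n, ((i : ℝ) ^ 2)⁻¹ := by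
            rw [← Finset.sum_filter]
            congr 1
            ext i
            simp [Finset.mem_filter, Finset.mem_Ioo, and_comm]
          rw [this]
          exact sum_Ioo_inv_sq_le k n
      _ ≤ 2 * ((a : ℝ) * max 1 (Real.log a ^ 2))⁻¹ := by
          have h1 : max 1 (Real.log a ^ 2) ≤ (k : ℝ) + 1 := by
            apply max_le
            · have : (0:ℝ) ≤ (k : ℝ) := Nat.cast_nonneg k
              linarith
            · exact (Nat.lt_floor_add_one _).le
          rcases Nat.eq_zero_or_pos a with ha | ha
          · simp [ha]
          have ha' : (0 : ℝ) < a := by exact_mod_cast ha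
          rw [mul_inv, div_eq_mul_inv]
          have hmaxpos : (0 : ℝ) < max 1 (Real.log a ^ 2) :=
            lt_of_lt_of_le one_pos (le_max_left _ _)
          have : ((k : ℝ) + 1)⁻¹ ≤ (max 1 (Real.log a ^ 2))⁻¹ :=
            inv_anti₀ hmaxpos h1
          calc (a : ℝ)⁻¹ * (2 * ((k:ℝ)+1)⁻¹) ≤ (a : ℝ)⁻¹ * (2 * (max 1 (Real.log a ^ 2))⁻¹) := by
                gcongr
            _ = 2 * ((a : ℝ)⁻¹ * (max 1 (Real.log a ^ 2))⁻¹) := by ring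

/-- Let `ℱ` be the set of positive integers `q` such that, writing `q = q̃ s²` with `q̃`
square-free and `s ≥ 1`, one has `s ≤ (log q̃)²`.  Then `∑_{q ∉ ℱ} 1/q < ∞`. -/
theorem summable_reciprocal_of_large_square_part :
    Summable (Set.indicator
      {q : ℕ | 1 ≤ q ∧ ¬ ∀ qt s : ℕ, Squarefree qt → 0 < s → q = qt * s ^ 2 →
        (s : ℝ) ≤ (Real.log qt) ^ 2}
      (fun q => (1 : ℝ) / q)) := by
  set B : Set ℕ := {q : ℕ | 1 ≤ q ∧ ¬ ∀ qt s : ℕ, Squarefree qt → 0 < s → q = qt * s ^ 2 →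
        (s : ℝ) ≤ (Real.log qt) ^ 2} with hB
  rw [← summable_subtype_iff_indicator]
  have key : ∀ q : B, ∃ p : ℕ × ℕ, ((q : ℕ) = p.1 * p.2 ^ 2 ∧ (Real.log p.1) ^ 2 < (p.2 : ℝ)) := by
    rintro ⟨q, hq1, hq2⟩
    push_neg at hq2
    obtain ⟨qt, s, _, _, heq, hlt⟩ := hq2
    exact ⟨(qt, s), heq, hlt⟩
  choose i hi1 hi2 using key
  have hinj : Function.Injective i := by
    intro q1 q2 h
    have e1 := hi1 q1
    have e2 := hi1 q2
    rw [h] at e1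
    exact Subtype.ext (e1.trans e2.symm)
  have hcomp := aux_double.comp_injective hinj
  have : (fun q : B => (1 : ℝ) / (q : ℕ)) = (fun p : ℕ × ℕ =>
      if (Real.log p.1) ^ 2 < (p.2 : ℝ) then ((p.1 : ℝ) * (p.2 : ℝ) ^ 2)⁻¹ else 0) ∘ i := by
    funext q
    simp only [Function.comp_apply, if_pos (hi2 q)]
    rw [one_div]
    congr 1
    have := hi1 q
    push_cast [this]
    ring
  rw [show ((fun q : ℕ => (1 : ℝ) / q) ∘ ((↑) : B → ℕ)) = fun q : B => (1 : ℝ) / (q : ℕ) from rfl,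
    this]
  exact hcomp
end

section
/- Let α be a real algebraic number of degree d ≥ 2 with minimal polynomial f ∈ ℤ[X] (irreducible over ℚ of degree d with f(α) = 0), and let F(x, y) := y^d f(x/y) ∈ ℤ[x, y] be its homogenization. Assume that for every ε > 0 there exists C_ε > 0 such that for all coprime integers m, n with m·n·F(m, n) ≠ 0, max(|m|, |n|)^{d − ε} ≤ C_ε · rad(m · n · F(m, n)). Then for every ε > 0 there exists C'_ε > 0 such that whenever p, q are coprime integers with q ≥ 2 and |α − p/q| < 1/q², every positive integer s with s² | q satisfies s ≤ C'_ε · q^ε. -/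
/-- The radical of an integer: the product of the distinct primes dividing it
(with `rad (±1) = rad 0 = 1` by convention on `primeFactors`). -/
def rad (n : ℤ) : ℕ := n.natAbs.primeFactors.prod id

lemma rad_pos (n : ℤ) : 0 < rad n :=
  Finset.prod_pos fun p hp => (Nat.prime_of_mem_primeFactors hp).pos

lemma rad_le_natAbs {n : ℤ} (h : n ≠ 0) : rad n ≤ n.natAbs :=
  Nat.le_of_dvd (Int.natAbs_pos.mpr h) (Nat.prod_primeFactors_dvd _)

lemma rad_mul_le (a b : ℤ) : rad (a * b) ≤ rad a * rad b := by
  rcases eq_or_ne (a * b) 0 with h | h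
  · rw [rad, h]
    simpa using Nat.one_le_iff_ne_zero.mpr (Nat.mul_ne_zero (rad_pos a).ne' (rad_pos b).ne')
  · have ha : a.natAbs ≠ 0 := Int.natAbs_ne_zero.mpr (fun h0 => h (by simp [h0]))
    have hb : b.natAbs ≠ 0 := Int.natAbs_ne_zero.mpr (fun h0 => h (by simp [h0]))
    unfold rad
    rw [Int.natAbs_mul, Nat.primeFactors_mul ha hb]
    apply Nat.le_of_dvd
    · exact Nat.mul_pos (rad_pos a) (rad_pos b)
    · have huni : a.natAbs.primeFactors ∪ b.natAbs.primeFactors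
          = a.natAbs.primeFactors ∪ (b.natAbs.primeFactors \ a.natAbs.primeFactors) := by
        rw [Finset.union_sdiff_self_eq_union]
      rw [huni, Finset.prod_union Finset.disjoint_sdiff]
      exact mul_dvd_mul dvd_rfl
        (Finset.prod_dvd_prod_of_subset _ _ id (Finset.sdiff_subset))

lemma rad_prod_factorization (q p : ℕ) (hp : p.Prime) :
    (∏ r ∈ q.primeFactors, r).factorization p
      = if p ∈ q.primeFactors then 1 else 0 := by
  rw [Nat.factorization_prod (fun r hr => (Nat.prime_of_mem_primeFactors hr).ne_zero)]
  rw [Finsupp.finset_sum_apply]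
  rw [Finset.sum_congr rfl (fun r hr => by
    show (Nat.factorization r) p = if r = p then 1 else 0
    rw [(Nat.prime_of_mem_primeFactors hr).factorization, Finsupp.single_apply])]
  exact Finset.sum_ite_eq' _ _ _

lemma mul_rad_dvd {q s : ℕ} (hq : q ≠ 0) (hs0 : s ≠ 0) (hs : s ^ 2 ∣ q) :
    s * (q.primeFactors.prod id) ∣ q := by
  rw [show q.primeFactors.prod id = ∏ r ∈ q.primeFactors, r from rfl]
  have hrad0 : (∏ r ∈ q.primeFactors, r) ≠ 0 :=
    (Finset.prod_pos fun p hp => (Nat.prime_of_mem_primeFactors hp).pos).ne'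
  rw [← Nat.factorization_le_iff_dvd (Nat.mul_ne_zero hs0 hrad0) hq, Finsupp.le_def]
  intro p
  by_cases hp : p.Prime
  · rw [Nat.factorization_mul hs0 hrad0, Finsupp.add_apply, rad_prod_factorization q p hp]
    have h2 : 2 * s.factorization p ≤ q.factorization p := by
      have h3 := (Nat.factorization_le_iff_dvd (pow_ne_zero 2 hs0) hq).mpr hs
      have h4 := Finsupp.le_def.mp h3 p
      simpa [Nat.factorization_pow, two_mul] using h4
    by_cases hmem : p ∈ q.primeFactors
    · have h1 : 1 ≤ q.factorization p :=
        hp.factorization_pos_of_dvd hq (Nat.dvd_of_mem_primeFactors hmem)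
      simp only [hmem, if_true]
      omega
    · simp only [hmem, if_false]
      omega
  · simp [Nat.factorization_eq_zero_of_not_prime _ hp]

lemma cast_eval_eq (f : Polynomial ℤ) (xQ : ℚ) :
    ((Polynomial.eval xQ (f.map (Int.castRingHom ℚ)) : ℚ) : ℝ)
      = Polynomial.eval (xQ : ℝ) (f.map (Int.castRingHom ℝ)) := by
  have hcomp : f.map (Int.castRingHom ℝ)
      = (f.map (Int.castRingHom ℚ)).map (algebraMap ℚ ℝ) := by
    rw [Polynomial.map_map,
      (Subsingleton.elim ((algebraMap ℚ ℝ).comp (Int.castRingHom ℚ)) (Int.castRingHom ℝ))]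
  have hx : (xQ : ℝ) = algebraMap ℚ ℝ xQ := (eq_ratCast (algebraMap ℚ ℝ) xQ).symm
  conv_rhs => rw [hcomp, hx, Polynomial.eval_map, Polynomial.eval₂_at_apply]
  exact (eq_ratCast _ _).symm

lemma irreducible_no_rat_root {g : Polynomial ℚ} {d : ℕ} (hd : 2 ≤ d)
    (hdeg : g.natDegree = d) (hirr : Irreducible g) (xQ : ℚ)
    (h : Polynomial.eval xQ g = 0) : False := by
  obtain ⟨b, hb⟩ := Polynomial.dvd_iff_isRoot.mpr h
  rcases hirr.isUnit_or_isUnit hb with h1 | h1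
  · exact Polynomial.not_isUnit_X_sub_C xQ h1
  · have hb0 : b ≠ 0 := h1.ne_zero
    have hgd : g.natDegree = 1 + b.natDegree := by
      rw [hb, Polynomial.natDegree_mul (Polynomial.X_sub_C_ne_zero xQ) hb0,
        Polynomial.natDegree_X_sub_C]
    rw [Polynomial.natDegree_eq_zero_of_isUnit h1, hdeg] at hgd
    omega

lemma pow_sub_pow_abs_le (x y M : ℝ) (n d : ℕ) (hn : n ≤ d) (hM : 1 ≤ M)
    (hx : |x| ≤ M) (hy : |y| ≤ M) :
    |x ^ n - y ^ n| ≤ (d * M ^ d) * |x - y| := by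
  rw [← geom_sum₂_mul x y n, abs_mul]
  have hsum : |∑ i ∈ Finset.range n, x ^ i * y ^ (n - 1 - i)| ≤ (d : ℝ) * M ^ d := by
    calc |∑ i ∈ Finset.range n, x ^ i * y ^ (n - 1 - i)|
        ≤ ∑ i ∈ Finset.range n, |x ^ i * y ^ (n - 1 - i)| := Finset.abs_sum_le_sum_abs _ _
      _ ≤ ∑ _i ∈ Finset.range n, M ^ d := by
          apply Finset.sum_le_sum
          intro i hi
          have hi' := Finset.mem_range.mp hi
          rw [abs_mul, abs_pow, abs_pow]
          calc |x| ^ i * |y| ^ (n - 1 - i) ≤ M ^ i * M ^ (n - 1 - i) :=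
              mul_le_mul (pow_le_pow_left₀ (abs_nonneg x) hx i)
                (pow_le_pow_left₀ (abs_nonneg y) hy _) (by positivity) (by positivity)
            _ = M ^ (i + (n - 1 - i)) := (pow_add M i _).symm
            _ ≤ M ^ d := pow_le_pow_right₀ hM (by omega)
      _ = n * M ^ d := by rw [Finset.sum_const, Finset.card_range]; ring
      _ ≤ d * M ^ d := by
          have hnd : (n : ℝ) ≤ d := by exact_mod_cast hn
          nlinarith [pow_nonneg (by linarith : (0:ℝ) ≤ M) d]
  exact mul_le_mul_of_nonneg_right hsum (abs_nonneg _)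

/-- The ABC conjecture implies that the denominators of good rational approximations to
a real algebraic number `α` of degree `d ≥ 2` are almost square-free: assuming the
ABC-consequence `max(|m|,|n|)^{d-ε} ≪_ε rad(m n F(m,n))` for the homogenization `F` of
the minimal polynomial of `α`, every `s` with `s² ∣ q` and `|α - p/q| < 1/q²`,
`gcd(p,q) = 1`, satisfies `s ≪_ε q^ε`. -/
theorem abc_implies_approximant_denominators_almost_squarefree
    (α : ℝ) (d : ℕ) (hd : 2 ≤ d) (f : Polynomial ℤ)
    (hdeg : f.natDegree = d)
    (hirr : Irreducible (f.map (Int.castRingHom ℚ)))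
    (hroot : Polynomial.aeval α f = 0)
    (F : ℤ → ℤ → ℤ)
    (hF : ∀ x y : ℤ, F x y = ∑ i ∈ Finset.range (d + 1), f.coeff i * x ^ i * y ^ (d - i))
    (habc : ∀ ε : ℝ, 0 < ε → ∃ C : ℝ, 0 < C ∧ ∀ m n : ℤ, Int.gcd m n = 1 →
      m * n * F m n ≠ 0 →
      (max |(m : ℝ)| |(n : ℝ)|) ^ ((d : ℝ) - ε) ≤ C * (rad (m * n * F m n) : ℝ)) :
    ∀ ε : ℝ, 0 < ε → ∃ C' : ℝ, 0 < C' ∧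
      ∀ (p : ℤ) (q : ℕ), 2 ≤ q → Int.gcd p q = 1 →
        |α - (p : ℝ) / (q : ℝ)| < 1 / (q : ℝ) ^ 2 →
        ∀ s : ℕ, 0 < s → s ^ 2 ∣ q → (s : ℝ) ≤ C' * (q : ℝ) ^ (ε : ℝ) := by
  intro ε hε
  set M : ℝ := |α| + 1 with hMdef
  have hM1 : (1:ℝ) ≤ M := by rw [hMdef]; linarith [abs_nonneg α]
  have hM0 : (0:ℝ) < M := by linarith
  set fR := f.map (Int.castRingHom ℝ) with hfRdef
  have hfRdeg : fR.natDegree = d := by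
    rw [hfRdef, Polynomial.natDegree_map_eq_of_injective Int.cast_injective f, hdeg]
  have evalform : ∀ y : ℝ, Polynomial.eval y fR
      = ∑ i ∈ Finset.range (d + 1), (f.coeff i : ℝ) * y ^ i := by
    intro y
    have h := Polynomial.eval_eq_sum_range (p := fR) y
    rw [hfRdeg] at h
    rw [h]
    exact Finset.sum_congr rfl fun i _ => by rw [hfRdef, Polynomial.coeff_map]; norm_num
  have hα0 : Polynomial.eval α fR = 0 := by
    rw [hfRdef, Polynomial.eval_map, ← algebraMap_int_eq, ← Polynomial.aeval_def]
    exact hroot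
  set B : ℝ := ∑ i ∈ Finset.range (d + 1), |(f.coeff i : ℝ)| with hBdef
  have hB0 : 0 ≤ B := Finset.sum_nonneg fun i _ => abs_nonneg _
  have hMd : (0:ℝ) < M ^ d := by positivity
  set L : ℝ := B * ((d : ℝ) * M ^ d) + 1 with hLdef
  have hL0 : (0:ℝ) < L := by
    have : 0 ≤ B * ((d : ℝ) * M ^ d) := by positivity
    linarith
  set ε' : ℝ := min ε 1 with hε'def
  have hε'pos : 0 < ε' := lt_min hε one_pos
  obtain ⟨C, hC, hABC⟩ := habc ε' hε'pos
  refine ⟨C * M * L, mul_pos (mul_pos hC hM0) hL0, ?_⟩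
  intro p q hq2 hcop happrox s hs hsq
  have hqR2 : (2:ℝ) ≤ (q : ℝ) := by exact_mod_cast hq2
  have hq0R : (0:ℝ) < q := by linarith
  have hq1R : (1:ℝ) ≤ q := by linarith
  have hqne : q ≠ 0 := by omega
  have hqZ0 : (q : ℤ) ≠ 0 := by exact_mod_cast hqne
  set x : ℝ := (p : ℝ) / (q : ℝ) with hxdef
  have hq2R : (1:ℝ) ≤ (q : ℝ) ^ 2 := one_le_pow₀ hq1R
  have hax : |α - x| < 1 :=
    lt_of_lt_of_le happrox (by rw [div_le_one (by positivity)]; exact hq2R)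
  have hxM : |x| ≤ M := by
    have h1 : |x| - |α| ≤ |x - α| := abs_sub_abs_le_abs_sub x α
    rw [abs_sub_comm] at h1
    rw [hMdef]; linarith
  have hαM : |α| ≤ M := by rw [hMdef]; linarith
  -- Lipschitz bound for fR near α
  have hfx : |Polynomial.eval x fR| ≤ L * |α - x| := by
    have key : Polynomial.eval x fR - Polynomial.eval α fR
        = ∑ i ∈ Finset.range (d + 1), (f.coeff i : ℝ) * (x ^ i - α ^ i) := by
      rw [evalform, evalform, ← Finset.sum_sub_distrib]
      exact Finset.sum_congr rfl fun i _ => by ring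
    rw [← sub_zero (Polynomial.eval x fR), ← hα0, key]
    calc |∑ i ∈ Finset.range (d + 1), (f.coeff i : ℝ) * (x ^ i - α ^ i)|
        ≤ ∑ i ∈ Finset.range (d + 1), |(f.coeff i : ℝ)| * |x ^ i - α ^ i| := by
          refine le_trans (Finset.abs_sum_le_sum_abs _ _) ?_
          exact le_of_eq (Finset.sum_congr rfl fun i _ => abs_mul _ _)
      _ ≤ ∑ i ∈ Finset.range (d + 1),
            |(f.coeff i : ℝ)| * (((d : ℝ) * M ^ d) * |x - α|) := by
          apply Finset.sum_le_sum
          intro i hi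
          have hid : i ≤ d := by have := Finset.mem_range.mp hi; omega
          exact mul_le_mul_of_nonneg_left
            (pow_sub_pow_abs_le x α M i d hid hM1 hxM hαM) (abs_nonneg _)
      _ = B * ((d : ℝ) * M ^ d) * |x - α| := by
          rw [hBdef, ← Finset.sum_mul]; ring
      _ ≤ L * |α - x| := by
          rw [abs_sub_comm x α]
          have h2 : 0 ≤ |α - x| := abs_nonneg _
          nlinarith
  -- F(p,q) = q^d * fR(p/q)
  have hFeq : ((F p q : ℤ) : ℝ) = (q : ℝ) ^ d * Polynomial.eval x fR := by
    rw [hF]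
    push_cast
    rw [evalform, Finset.mul_sum]
    apply Finset.sum_congr rfl
    intro i hi
    have hid : i ≤ d := by have := Finset.mem_range.mp hi; omega
    have hqd : (q : ℝ) ^ d = (q : ℝ) ^ (d - i) * (q : ℝ) ^ i := by
      rw [← pow_add]; congr 1; omega
    rw [hxdef, div_pow, hqd]
    field_simp
  -- bound on |F(p,q)|
  have hFb : |((F p q : ℤ) : ℝ)| ≤ L * (q : ℝ) ^ (d - 2) := by
    have h1 : |((F p q : ℤ) : ℝ)| = (q : ℝ) ^ d * |Polynomial.eval x fR| := by
      rw [hFeq, abs_mul, abs_of_pos (by positivity)]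
    have h2 : |α - x| ≤ 1 / (q : ℝ) ^ 2 := le_of_lt happrox
    have hqd : (q : ℝ) ^ d = (q : ℝ) ^ (d - 2) * (q : ℝ) ^ 2 := by
      rw [← pow_add]; congr 1; omega
    rw [h1, hqd]
    calc (q : ℝ) ^ (d - 2) * (q : ℝ) ^ 2 * |Polynomial.eval x fR|
        ≤ (q : ℝ) ^ (d - 2) * (q : ℝ) ^ 2 * (L * (1 / (q : ℝ) ^ 2)) := by
          apply mul_le_mul_of_nonneg_left _ (by positivity)
          exact le_trans hfx (mul_le_mul_of_nonneg_left h2 hL0.le)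
      _ = L * (q : ℝ) ^ (d - 2) := by field_simp
  -- nonvanishing
  have hp0 : p ≠ 0 := by
    intro h
    rw [h] at hcop
    simp [Int.gcd] at hcop
    omega
  have hfx0 : Polynomial.eval x fR ≠ 0 := by
    intro h0
    set xQ : ℚ := (p : ℚ) / (q : ℚ) with hxQ
    have hxx : (xQ : ℝ) = x := by rw [hxdef, hxQ]; push_cast; ring
    have hQ0 : Polynomial.eval xQ (f.map (Int.castRingHom ℚ)) = 0 := by
      have hce := cast_eval_eq f xQ
      rw [hxx, ← hfRdef, h0] at hce
      exact_mod_cast hce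
    have hgdeg : (f.map (Int.castRingHom ℚ)).natDegree = d := by
      rw [Polynomial.natDegree_map_eq_of_injective Int.cast_injective f, hdeg]
    exact irreducible_no_rat_root hd hgdeg hirr xQ hQ0
  have hFne : F p q ≠ 0 := by
    intro h0
    apply hfx0
    have hz : ((F p q : ℤ) : ℝ) = 0 := by rw [h0]; norm_num
    rw [hFeq] at hz
    exact (mul_eq_zero.mp hz).resolve_left (by positivity)
  -- apply ABC
  have hmn0 : p * q * F p q ≠ 0 := mul_ne_zero (mul_ne_zero hp0 hqZ0) hFne
  have key := hABC p q hcop hmn0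
  have habs_q : |(((q : ℤ)) : ℝ)| = (q : ℝ) := by
    rw [abs_of_pos (by exact_mod_cast hq0R)]; norm_num
  have hexp0 : (0:ℝ) ≤ (d : ℝ) - ε' := by
    have h1 : ε' ≤ 1 := min_le_right _ _
    have h2 : (2:ℝ) ≤ d := by exact_mod_cast hd
    linarith
  have h1 : (q : ℝ) ^ ((d : ℝ) - ε') ≤ C * (rad (p * q * F p q) : ℝ) := by
    refine le_trans (Real.rpow_le_rpow hq0R.le ?_ hexp0) key
    rw [← habs_q]
    exact le_max_right _ _
  -- radical bound (in ℕ)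
  have hradnat : rad (p * q * F p q) * s ≤ p.natAbs * q * (F p q).natAbs := by
    have hA : rad (p * ↑q * F p ↑q) ≤ rad p * rad (↑q : ℤ) * rad (F p ↑q) :=
      le_trans (rad_mul_le _ _) (Nat.mul_le_mul_right _ (rad_mul_le _ _))
    have hB2 : s * rad ((q : ℤ)) ≤ q := by
      apply Nat.le_of_dvd (by omega)
      have : rad ((q : ℤ)) = q.primeFactors.prod id := by unfold rad; rw [Int.natAbs_natCast]
      rw [this]
      exact mul_rad_dvd hqne (by omega) hsq
    calc rad (p * ↑q * F p ↑q) * s ≤ (rad p * rad (↑q : ℤ) * rad (F p ↑q)) * s :=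
        Nat.mul_le_mul_right _ hA
      _ = rad p * (s * rad (↑q : ℤ)) * rad (F p ↑q) := by ring
      _ ≤ p.natAbs * q * (F p ↑q).natAbs := by
          exact Nat.mul_le_mul (Nat.mul_le_mul (rad_le_natAbs hp0) hB2)
            (rad_le_natAbs hFne)
  -- cast to ℝ and feed the analytic bounds
  have hpabs : |(p : ℝ)| ≤ M * q := by
    have h2 : |x| * q ≤ M * q := mul_le_mul_of_nonneg_right hxM hq0R.le
    rw [hxdef, abs_div, abs_of_pos hq0R, div_mul_cancel₀ _ hq0R.ne'] at h2
    exact h2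
  have hradR : (rad (p * q * F p q) : ℝ) * s ≤ (M * q) * q * (L * (q : ℝ) ^ (d - 2)) := by
    have hcast : ((rad (p * ↑q * F p ↑q) * s : ℕ) : ℝ)
        ≤ ((p.natAbs * q * (F p ↑q).natAbs : ℕ) : ℝ) := by exact_mod_cast hradnat
    push_cast [Nat.cast_natAbs] at hcast
    calc (rad (p * ↑q * F p ↑q) : ℝ) * s ≤ |(p : ℝ)| * q * |((F p ↑q : ℤ) : ℝ)| := by
          convert hcast using 2 <;> push_cast <;> ring_nf
      _ ≤ (M * q) * q * (L * (q : ℝ) ^ (d - 2)) := by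
          apply mul_le_mul (mul_le_mul_of_nonneg_right hpabs hq0R.le) hFb
            (abs_nonneg _) (by positivity)
  -- final chain
  have hqd_split : (q : ℝ) ^ (d : ℝ) = (q : ℝ) ^ ε' * (q : ℝ) ^ ((d : ℝ) - ε') := by
    rw [← Real.rpow_add hq0R]; ring_nf
  have hqd_nat : (q : ℝ) ^ (d : ℝ) = (q : ℝ) ^ d := Real.rpow_natCast _ d
  have hqd2 : (M * q) * q * (L * (q : ℝ) ^ (d - 2)) = (M * L) * (q : ℝ) ^ d := by
    have : (q : ℝ) ^ d = (q : ℝ) ^ (d - 2) * (q : ℝ) ^ 2 := by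
      rw [← pow_add]; congr 1; omega
    rw [this]; ring
  have hchain : (s : ℝ) * ((q : ℝ) ^ ((d : ℝ) - ε'))
      ≤ (C * M * L) * (q : ℝ) ^ (d : ℝ) := by
    calc (s : ℝ) * ((q : ℝ) ^ ((d : ℝ) - ε'))
        ≤ (s : ℝ) * (C * (rad (p * q * F p q) : ℝ)) := by
          exact mul_le_mul_of_nonneg_left h1 (Nat.cast_nonneg s)
      _ = C * ((rad (p * q * F p q) : ℝ) * s) := by ring
      _ ≤ C * ((M * q) * q * (L * (q : ℝ) ^ (d - 2))) :=
          mul_le_mul_of_nonneg_left hradR hC.le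
      _ = (C * M * L) * (q : ℝ) ^ d := by rw [hqd2]; ring
      _ = (C * M * L) * (q : ℝ) ^ (d : ℝ) := by rw [hqd_nat]
  have hrppos : (0:ℝ) < (q : ℝ) ^ ((d : ℝ) - ε') := Real.rpow_pos_of_pos hq0R _
  have hs_le : (s : ℝ) ≤ (C * M * L) * (q : ℝ) ^ ε' := by
    have h3 : (s : ℝ) * ((q : ℝ) ^ ((d : ℝ) - ε'))
        ≤ ((C * M * L) * (q : ℝ) ^ ε') * ((q : ℝ) ^ ((d : ℝ) - ε')) := by
      rw [mul_assoc, ← hqd_split]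
      exact hchain
    exact le_of_mul_le_mul_right h3 hrppos
  have hmono : (q : ℝ) ^ ε' ≤ (q : ℝ) ^ ε :=
    Real.rpow_le_rpow_of_exponent_le hq1R (min_le_left _ _)
  calc (s : ℝ) ≤ (C * M * L) * (q : ℝ) ^ ε' := hs_le
    _ ≤ (C * M * L) * (q : ℝ) ^ ε :=
        mul_le_mul_of_nonneg_left hmono (by positivity)
end

section
/- Let α be an irrational real number that is not of type 3, i.e., for every c > 0 there exist integers a and q ≥ 1 with gcd(a, q) = 1 and 0 < |α − a/q| < c/q³. Then for every integer k ≥ 1 there exist a subsequence N_1 < N_2 < ⋯ of positive integers and a measure ν_k on [0, ∞) of total mass at most 1, supported on the set of nonnegative integers {0, 1, 2, …}, such that μ_k(N_j, α) converges vaguely to ν_k as j → ∞, i.e., ∫ g dμ_k(N_j, α) → ∫ g dν_k for every continuous compactly supported g: [0, ∞) → ℝ. -/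
open MeasureTheory Filter

open scoped ENNReal

/-- The ordered fractional parts `β_j` extended by `β_{N+j} = β_j + 1`. -/
noncomputable def betaExt (N : ℕ) (x : ℕ → ℝ) (j : ℕ) : ℝ :=
  if j ≤ N then nthBeta N x j else nthBeta N x (j - N) + 1

/-- The `k`-th consecutive spacing measure
`μ_k(N) = N⁻¹ ∑_{j=1}^N δ_{N (β_{j+k} - β_j)}`. -/
noncomputable def spacingMeasure (k N : ℕ) (x : ℕ → ℝ) : Measure ℝ :=
  ((N : ℝ≥0∞))⁻¹ •
    ∑ j ∈ Finset.Icc 1 N,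
      Measure.dirac ((N : ℝ) * (betaExt N x (j + k) - betaExt N x j))

/-!
For a rational approximation `|α - a/N| < c/N³` and `n ≤ N`, the number `N n² α` is within `c`
of the integer `n² a`, so every point `N {n² α}` lies within `c` of an integer and every rescaled
spacing `N (β_{j+k} - β_j)` lies within `2c` of a nonnegative integer. Since `α` is not of type 3,
there are such `N` with `c → 0`. Along them, `μ_k(N, α)` is asymptotically the measure `ρ_N` on
`ℕ` obtained by rounding its atoms. These have mass at most `1`, so by compactness of `[0, ∞]^ℕ`
a subsequence converges on every singleton to some `ρ`, and `ν_k` is the push-forward of `ρ`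
to `ℝ`.
-/

open MeasureTheory Filter Topology Finset

noncomputable section

section OrderStatistics

variable {N : ℕ} {x : ℕ → ℝ}

lemma length_sortedFracParts (N : ℕ) (x : ℕ → ℝ) : (sortedFracParts N x).length = N := by
  simp [sortedFracParts]

lemma exists_eq_fract_of_mem_sortedFracParts {b : ℝ} (hb : b ∈ sortedFracParts N x) :
    ∃ n ∈ Icc 1 N, b = Int.fract (x n) := by
  rw [sortedFracParts, Multiset.mem_sort] at hb
  obtain ⟨n, hn, rfl⟩ := Multiset.mem_map.mp hb
  exact ⟨n, hn, rfl⟩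

lemma nthBeta_mem_sortedFracParts {j : ℕ} (hj₁ : 1 ≤ j) (hj₂ : j ≤ N) :
    nthBeta N x j ∈ sortedFracParts N x := by
  have hj : j - 1 < (sortedFracParts N x).length := by rw [length_sortedFracParts]; omega
  rw [nthBeta, List.getD_eq_getElem _ _ hj]
  exact List.getElem_mem hj

lemma nthBeta_mem_Ico {j : ℕ} (hj₁ : 1 ≤ j) (hj₂ : j ≤ N) : nthBeta N x j ∈ Set.Ico 0 1 := by
  obtain ⟨n, -, hn⟩ := exists_eq_fract_of_mem_sortedFracParts (nthBeta_mem_sortedFracParts hj₁ hj₂)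
  exact hn ▸ ⟨Int.fract_nonneg _, Int.fract_lt_one _⟩

lemma nthBeta_le_nthBeta {i j : ℕ} (hi : 1 ≤ i) (hij : i ≤ j) (hj : j ≤ N) :
    nthBeta N x i ≤ nthBeta N x j := by
  have hi' : i - 1 < (sortedFracParts N x).length := by rw [length_sortedFracParts]; omega
  have hj' : j - 1 < (sortedFracParts N x).length := by rw [length_sortedFracParts]; omega
  have hsorted : (sortedFracParts N x).Pairwise (· ≤ ·) := Multiset.pairwise_sort _ _
  rw [nthBeta, nthBeta, List.getD_eq_getElem _ _ hi', List.getD_eq_getElem _ _ hj']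
  exact hsorted.rel_get_of_le (a := ⟨i - 1, hi'⟩) (b := ⟨j - 1, hj'⟩)
    (by simp only [Fin.mk_le_mk]; omega)

lemma betaExt_le_betaExt {i j : ℕ} (hi : 1 ≤ i) (hij : i ≤ j) (hj : j ≤ 2 * N) :
    betaExt N x i ≤ betaExt N x j := by
  unfold betaExt
  split_ifs with hiN hjN hjN
  · exact nthBeta_le_nthBeta hi hij hjN
  · linarith [(nthBeta_mem_Ico (x := x) hi hiN).2,
      (nthBeta_mem_Ico (N := N) (x := x) (j := j - N) (by omega) (by omega)).1]
  · omega
  · linarith [nthBeta_le_nthBeta (N := N) (x := x) (i := i - N) (j := j - N)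
      (by omega) (by omega) (by omega)]

lemma exists_int_abs_mul_betaExt_sub_lt {c : ℝ}
    (h : ∀ n ∈ Icc 1 N, ∃ m : ℤ, |N * Int.fract (x n) - m| < c) {j : ℕ} (hj₁ : 1 ≤ j)
    (hj₂ : j ≤ 2 * N) : ∃ m : ℤ, |N * betaExt N x j - m| < c := by
  unfold betaExt
  split_ifs with hjN
  · obtain ⟨n, hn, hβ⟩ :=
      exists_eq_fract_of_mem_sortedFracParts (nthBeta_mem_sortedFracParts (x := x) hj₁ hjN)
    exact hβ ▸ h n hn
  · obtain ⟨n, hn, hβ⟩ := exists_eq_fract_of_mem_sortedFracParts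
      (nthBeta_mem_sortedFracParts (N := N) (x := x) (j := j - N) (by omega) (by omega))
    obtain ⟨m, hm⟩ := h n hn
    refine ⟨m + N, ?_⟩
    rw [hβ]
    convert hm using 2
    push_cast
    ring

end OrderStatistics

def spacing (k N : ℕ) (x : ℕ → ℝ) (j : ℕ) : ℝ :=
  N * (betaExt N x (j + k) - betaExt N x j)

def roundedSpacing (k N : ℕ) (x : ℕ → ℝ) (j : ℕ) : ℕ :=
  (round (spacing k N x j)).toNat

def roundedSpacingMeasure (k N : ℕ) (x : ℕ → ℝ) : Measure ℕ :=
  (N : ℝ≥0∞)⁻¹ • ∑ j ∈ Icc 1 N, Measure.dirac (roundedSpacing k N x j)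

section Spacing

variable {k N : ℕ} {x : ℕ → ℝ} {j : ℕ}

lemma spacing_nonneg (hj : 1 ≤ j) (hjk : j + k ≤ 2 * N) : 0 ≤ spacing k N x j :=
  mul_nonneg N.cast_nonneg (sub_nonneg.mpr (betaExt_le_betaExt hj (by omega) hjk))

lemma natCast_roundedSpacing (hj : 1 ≤ j) (hjk : j + k ≤ 2 * N) :
    (roundedSpacing k N x j : ℝ) = round (spacing k N x j) := by
  have h : 0 ≤ round (spacing k N x j) := by
    rw [round_eq]
    exact Int.floor_nonneg.mpr (by linarith [spacing_nonneg (x := x) hj hjk])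
  exact_mod_cast Int.toNat_of_nonneg h

lemma abs_spacing_sub_roundedSpacing_lt {c : ℝ}
    (h : ∀ n ∈ Icc 1 N, ∃ m : ℤ, |N * Int.fract (x n) - m| < c) (hj : 1 ≤ j)
    (hjk : j + k ≤ 2 * N) : |spacing k N x j - roundedSpacing k N x j| < 2 * c := by
  obtain ⟨m₁, hm₁⟩ := exists_int_abs_mul_betaExt_sub_lt h (j := j + k) (by omega) hjk
  obtain ⟨m₂, hm₂⟩ := exists_int_abs_mul_betaExt_sub_lt h hj (by omega)
  rw [natCast_roundedSpacing hj hjk]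
  calc |spacing k N x j - round (spacing k N x j)|
      ≤ |spacing k N x j - ((m₁ - m₂ : ℤ) : ℝ)| := round_le _ _
    _ = |(N * betaExt N x (j + k) - m₁) - (N * betaExt N x j - m₂)| := by
        rw [spacing]; push_cast; ring_nf
    _ ≤ |N * betaExt N x (j + k) - m₁| + |N * betaExt N x j - m₂| := abs_sub _ _
    _ < 2 * c := by linarith

lemma roundedSpacingMeasure_univ_le_one (k N : ℕ) (x : ℕ → ℝ) :
    roundedSpacingMeasure k N x Set.univ ≤ 1 := by
  simp [roundedSpacingMeasure]

instance (k N : ℕ) (x : ℕ → ℝ) : IsFiniteMeasure (roundedSpacingMeasure k N x) :=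
  ⟨(roundedSpacingMeasure_univ_le_one k N x).trans_lt ENNReal.one_lt_top⟩

end Spacing

lemma Irrational.frequently_exists_abs_sub_div_lt {α : ℝ} (hα : Irrational α)
    (h : ∀ c : ℝ, 0 < c → ∃ (a : ℤ) (q : ℕ), 1 ≤ q ∧ |α - a / q| < c / (q : ℝ) ^ 3)
    {c : ℝ} (hc : 0 < c) : ∃ᶠ q : ℕ in atTop, ∃ a : ℤ, |α - a / q| < c / (q : ℝ) ^ 3 := by
  rw [frequently_atTop]
  intro Q
  have hpos : ∀ q ∈ Ico 1 Q, 0 < (q : ℝ) ^ 2 * |q * α - round (q * α)| := by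
    intro q hq
    have hq0 : q ≠ 0 := by have := (mem_Ico.mp hq).1; omega
    have := (hα.natCast_mul hq0).ne_int (round (q * α))
    have := abs_pos.mpr (sub_ne_zero.mpr this)
    positivity
  -- As `c' < q² ‖q α‖` for every `q < Q`, an approximation of quality `c'` has denominator `≥ Q`.
  have hsmall : ∀ᶠ c' in 𝓝 (0 : ℝ),
      c' ≤ c ∧ ∀ q ∈ Ico 1 Q, c' < (q : ℝ) ^ 2 * |q * α - round (q * α)| :=
    (eventually_le_nhds hc).and
      ((eventually_all_finset _).mpr fun q hq => eventually_lt_nhds (hpos q hq))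
  have hpos' : ∀ᶠ c' in 𝓝[>] (0 : ℝ), 0 < c' := self_mem_nhdsWithin
  obtain ⟨c', ⟨hc'c, hc'Q⟩, hc'⟩ := ((hsmall.filter_mono nhdsWithin_le_nhds).and hpos').exists
  obtain ⟨a, q, hq, hlt⟩ := h c' hc'
  refine ⟨q, ?_, a, hlt.trans_le (by gcongr)⟩
  by_contra! hqQ
  have hq0 : (0 : ℝ) < q := by exact_mod_cast hq
  have hqa : (q : ℝ) ^ 2 * |q * α - a| < c' := by
    rw [lt_div_iff₀ (by positivity)] at hlt
    calc (q : ℝ) ^ 2 * |q * α - a| = |α - a / q| * q ^ 3 := by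
          rw [show (q : ℝ) * α - a = q * (α - a / q) by field_simp, abs_mul, abs_of_pos hq0]
          ring
      _ < c' := hlt
  linarith [hc'Q q (mem_Ico.mpr ⟨hq, hqQ⟩),
    mul_le_mul_of_nonneg_left (round_le ((q : ℝ) * α) a) (sq_nonneg (q : ℝ))]

lemma Irrational.exists_strictMono_abs_sub_div_lt {α : ℝ} (hα : Irrational α)
    (h : ∀ c : ℝ, 0 < c → ∃ (a : ℤ) (q : ℕ), 1 ≤ q ∧ |α - a / q| < c / (q : ℝ) ^ 3) :
    ∃ N : ℕ → ℕ, StrictMono N ∧ (∀ j, 0 < N j) ∧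
      ∀ ε > 0, ∀ᶠ j in atTop, ∃ a : ℤ, |α - a / N j| < ε / (N j : ℝ) ^ 3 := by
  obtain ⟨N, hN, hNgood⟩ := extraction_forall_of_frequently fun j : ℕ =>
    (hα.frequently_exists_abs_sub_div_lt h (c := 1 / (j + 1)) (by positivity)).and_eventually
      (eventually_gt_atTop 0)
  refine ⟨N, hN, fun j => (hNgood j).2, fun ε hε => ?_⟩
  filter_upwards [tendsto_one_div_add_atTop_nhds_zero_nat.eventually (eventually_lt_nhds hε)]
    with j hj
  obtain ⟨a, ha⟩ := (hNgood j).1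
  exact ⟨a, ha.trans_le (by gcongr)⟩

lemma exists_int_abs_mul_fract_sq_mul_sub_lt {α c : ℝ} {a : ℤ} {N n : ℕ}
    (h : |α - a / N| < c / (N : ℝ) ^ 3) (hn : n ≤ N) :
    ∃ m : ℤ, |N * Int.fract ((n : ℝ) ^ 2 * α) - m| < c := by
  have hN : (0 : ℝ) < N := Nat.cast_pos.mpr <| Nat.pos_of_ne_zero fun hN => by
    simp [hN] at h
    exact (abs_nonneg α).not_gt h
  refine ⟨n ^ 2 * a - N * ⌊(n : ℝ) ^ 2 * α⌋, ?_⟩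
  have hnN : (n : ℝ) ^ 2 ≤ (N : ℝ) ^ 2 := by gcongr
  have hdiff : N * Int.fract ((n : ℝ) ^ 2 * α) - ((n ^ 2 * a - N * ⌊(n : ℝ) ^ 2 * α⌋ : ℤ) : ℝ)
      = (n : ℝ) ^ 2 * (N * (α - a / N)) := by
    rw [Int.fract]
    push_cast
    field_simp
    ring
  calc |N * Int.fract ((n : ℝ) ^ 2 * α) - ((n ^ 2 * a - N * ⌊(n : ℝ) ^ 2 * α⌋ : ℤ) : ℝ)|
      = (n : ℝ) ^ 2 * (N * |α - a / N|) := by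
        rw [hdiff, abs_mul, abs_mul, abs_of_nonneg (sq_nonneg _), abs_of_pos hN]
    _ ≤ (N : ℝ) ^ 2 * (N * |α - a / N|) := by gcongr
    _ < (N : ℝ) ^ 2 * (N * (c / N ^ 3)) := by gcongr
    _ = c := by field_simp

lemma eventually_forall_abs_spacing_sub_roundedSpacing_lt {α : ℝ} {k : ℕ} {N : ℕ → ℕ}
    (hN : Tendsto N atTop atTop)
    (happrox : ∀ ε > 0, ∀ᶠ j in atTop, ∃ a : ℤ, |α - a / N j| < ε / (N j : ℝ) ^ 3)
    {ε : ℝ} (hε : 0 < ε) :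
    ∀ᶠ j in atTop, ∀ l ∈ Icc 1 (N j), |spacing k (N j) (fun n => (n : ℝ) ^ 2 * α) l -
      roundedSpacing k (N j) (fun n => (n : ℝ) ^ 2 * α) l| < ε := by
  filter_upwards [happrox (ε / 2) (half_pos hε), hN.eventually_ge_atTop k] with j ⟨a, ha⟩ hkN l hl
  have hnear : ∀ n ∈ Icc 1 (N j), ∃ m : ℤ, |N j * Int.fract ((n : ℝ) ^ 2 * α) - m| < ε / 2 :=
    fun n hn => exists_int_abs_mul_fract_sq_mul_sub_lt ha (mem_Icc.mp hn).2
  obtain ⟨hl₁, hl₂⟩ := mem_Icc.mp hl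
  have := abs_spacing_sub_roundedSpacing_lt (k := k) hnear hl₁ (by omega)
  linarith

lemma integral_smul_sum_dirac {X ι : Type*} [MeasurableSpace X] [MeasurableSingletonClass X]
    (c : ℝ≥0∞) (s : Finset ι) (p : ι → X) (g : X → ℝ) :
    ∫ y, g y ∂(c • ∑ l ∈ s, Measure.dirac (p l)) = c.toReal * ∑ l ∈ s, g (p l) := by
  rw [integral_smul_measure,
    integral_finsetSum_measure fun l _ => integrable_dirac enorm_lt_top]
  simp [integral_dirac]

lemma tendsto_integral_spacingMeasure_sub_integral_roundedSpacingMeasure {g : ℝ → ℝ}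
    (hg : UniformContinuous g) {k : ℕ} {N : ℕ → ℕ} {x : ℕ → ℝ}
    (h : ∀ ε > 0, ∀ᶠ j in atTop, ∀ l ∈ Icc 1 (N j),
      |spacing k (N j) x l - roundedSpacing k (N j) x l| < ε) :
    Tendsto (fun j => ∫ t, g t ∂spacingMeasure k (N j) x -
      ∫ i, g i ∂roundedSpacingMeasure k (N j) x) atTop (𝓝 0) := by
  rw [Metric.tendsto_nhds]
  intro ε hε
  obtain ⟨δ, hδ, hgδ⟩ := Metric.uniformContinuous_iff.mp hg (ε / 2) (half_pos hε)
  filter_upwards [h δ hδ] with j hj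
  set n := N j
  have hclose : ∀ l ∈ Icc 1 n, |g (spacing k n x l) - g (roundedSpacing k n x l)| ≤ ε / 2 :=
    fun l hl => (hgδ (hj l hl)).le
  simp only [spacingMeasure, roundedSpacingMeasure, integral_smul_sum_dirac, ENNReal.toReal_inv,
    ENNReal.toReal_natCast, ← mul_sub, ← sum_sub_distrib, dist_zero_right, Real.norm_eq_abs,
    abs_mul, abs_inv, Nat.abs_cast]
  calc (n : ℝ)⁻¹ * |∑ l ∈ Icc 1 n, (g (spacing k n x l) - g (roundedSpacing k n x l))|
      ≤ (n : ℝ)⁻¹ * (n * (ε / 2)) := by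
        gcongr
        refine (abs_sum_le_sum_abs _ _).trans ?_
        simpa using sum_le_card_nsmul _ _ _ hclose
    _ = ((n : ℝ)⁻¹ * n) * (ε / 2) := by ring
    _ ≤ 1 * (ε / 2) := by gcongr; exact inv_mul_le_one
    _ < ε := by linarith

lemma integral_eq_sum_range_of_forall_ge {μ : Measure ℕ} [IsFiniteMeasure μ] {f : ℕ → ℝ}
    {M : ℕ} (hf : ∀ i, M ≤ i → f i = 0) : ∫ i, f i ∂μ = ∑ i ∈ range M, μ.real {i} * f i := by
  have hbound : ∀ i, ‖f i‖ ≤ ∑ i ∈ range M, |f i| := by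
    intro i
    by_cases hi : i < M
    · exact single_le_sum (fun i _ => abs_nonneg (f i)) (mem_range.mpr hi)
    · simpa [hf i (not_lt.mp hi)] using sum_nonneg fun i _ => abs_nonneg (f i)
  have hint : Integrable f μ :=
    .of_bound measurable_from_nat.aestronglyMeasurable _ (ae_of_all _ hbound)
  rw [integral_countable hint,
    tsum_eq_sum (s := range M) fun i hi => by simp [hf i (by simpa using hi)]]
  simp only [smul_eq_mul]

lemma tendsto_integral_of_tendsto_measure_singleton {m : ℕ → Measure ℕ} {μ : Measure ℕ}
    [∀ j, IsFiniteMeasure (m j)] [IsFiniteMeasure μ]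
    (h : ∀ i, Tendsto (fun j => m j {i}) atTop (𝓝 (μ {i}))) {f : ℕ → ℝ}
    (hf : ∀ᶠ i in atTop, f i = 0) :
    Tendsto (fun j => ∫ i, f i ∂m j) atTop (𝓝 (∫ i, f i ∂μ)) := by
  obtain ⟨M, hM⟩ := eventually_atTop.mp hf
  simp only [integral_eq_sum_range_of_forall_ge hM]
  exact tendsto_finsetSum _ fun i _ =>
    ((ENNReal.tendsto_toReal (measure_ne_top μ {i})).comp (h i)).mul_const _

lemma exists_subseq_tendsto_measure_singleton (m : ℕ → Measure ℕ)
    (hm : ∀ j, m j Set.univ ≤ 1) : ∃ φ : ℕ → ℕ, StrictMono φ ∧ ∃ μ : Measure ℕ,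
      μ Set.univ ≤ 1 ∧ ∀ i, Tendsto (fun j => m (φ j) {i}) atTop (𝓝 (μ {i})) := by
  obtain ⟨w, φ, hφ, hw⟩ := CompactSpace.tendsto_subseq fun j (i : ℕ) => m j {i}
  have hwi : ∀ i, Tendsto (fun j => m (φ j) {i}) atTop (𝓝 (w i)) := tendsto_pi_nhds.mp hw
  refine ⟨φ, hφ, Measure.sum fun i => w i • Measure.dirac i, ?_,
    fun i => by simpa [Pi.single_apply] using hwi i⟩
  simp only [Measure.sum_apply _ MeasurableSet.univ, Measure.smul_apply, measure_univ,
    smul_eq_mul, mul_one]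
  refine ENNReal.tsum_le_of_sum_range_le fun n =>
    le_of_tendsto' (tendsto_finsetSum _ fun i _ => hwi i) fun j => ?_
  rw [sum_measure_singleton]
  exact (measure_mono (Set.subset_univ _)).trans (hm _)

end

/-- If the irrational `α` is not of type `3`, then for every `k ≥ 1` some subsequence of
the consecutive spacing measures `μ_k(N, α)` converges vaguely to a measure of total
mass at most `1` supported on the nonnegative integers. -/
theorem not_type_three_spacing_measures_converge_to_integer_supported
    (α : ℝ) (hα : Irrational α)
    (hnot3 : ∀ c : ℝ, 0 < c → ∃ (a : ℤ) (q : ℕ), 1 ≤ q ∧ Int.gcd a q = 1 ∧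
      0 < |α - (a : ℝ) / (q : ℝ)| ∧ |α - (a : ℝ) / (q : ℝ)| < c / (q : ℝ) ^ 3) :
    ∀ k : ℕ, 1 ≤ k → ∃ N : ℕ → ℕ, StrictMono N ∧ (∀ j, 0 < N j) ∧
      ∃ ν : Measure ℝ, ν Set.univ ≤ 1 ∧
        ν {t : ℝ | t ∉ Set.range ((↑) : ℕ → ℝ)} = 0 ∧
        ∀ g : ℝ → ℝ, Continuous g → HasCompactSupport g →
          Tendsto
            (fun j => ∫ t, g t ∂(spacingMeasure k (N j) (fun n => (n : ℝ) ^ 2 * α)))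
            atTop (nhds (∫ t, g t ∂ν)) := by
  intro k _
  obtain ⟨N, hN, hNpos, happrox⟩ := hα.exists_strictMono_abs_sub_div_lt fun c hc =>
    let ⟨a, q, hq, _, _, hlt⟩ := hnot3 c hc; ⟨a, q, hq, hlt⟩
  obtain ⟨φ, hφ, μ, hμ, hconv⟩ := exists_subseq_tendsto_measure_singleton
    (fun j => roundedSpacingMeasure k (N j) fun n => (n : ℝ) ^ 2 * α)
    fun j => roundedSpacingMeasure_univ_le_one _ _ _
  have : IsFiniteMeasure μ := ⟨hμ.trans_lt ENNReal.one_lt_top⟩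
  refine ⟨N ∘ φ, hN.comp hφ, fun j => hNpos _, μ.map (↑), ?_, ?_, fun g hg hgc => ?_⟩
  · rwa [Measure.map_apply measurable_from_nat MeasurableSet.univ]
  · have hmeas : MeasurableSet {t : ℝ | t ∉ Set.range ((↑) : ℕ → ℝ)} :=
      (Set.countable_range _).measurableSet.compl
    rw [Measure.map_apply measurable_from_nat hmeas]
    simp
  have hg0 : ∀ᶠ i : ℕ in atTop, g i = 0 :=
    (tendsto_natCast_atTop_atTop.mono_right (coclosedCompact_eq_cocompact (X := ℝ) ▸
      atTop_le_cocompact)).eventually (hasCompactSupport_iff_eventuallyEq.mp hgc)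
  have hclose := tendsto_integral_spacingMeasure_sub_integral_roundedSpacingMeasure
    (hgc.uniformContinuous_of_continuous hg) fun ε hε =>
      eventually_forall_abs_spacing_sub_roundedSpacing_lt (k := k) (hN.comp hφ).tendsto_atTop
        (fun ε hε => hφ.tendsto_atTop.eventually (happrox ε hε)) hε
  have hrounded := tendsto_integral_of_tendsto_measure_singleton hconv hg0
  rw [integral_map measurable_from_nat.aemeasurable hg.aestronglyMeasurable]
  simpa using hclose.add hrounded
end

section
/- Let (r_m)_{m ≥ 0} be a sequence of positive integers with r_0 = 1. Define integers v_m by v_{−1} = 0, v_0 = 1, and v_{m+1} = r_m v_m² + v_{m−1} for m ≥ 0. Define a_0 = 1 and a_{m+1} = r_m² v_m² + 2 r_m v_{m−1} for m ≥ 0, and define q_m by q_{−1} = 0, q_0 = 1, and q_{m+1} = a_{m+1} q_m + q_{m−1} for m ≥ 0. Then q_m = v_m² for all m ≥ 0; in particular, every denominator of a convergent of the continued fraction [a_0; a_1, a_2, …] is a perfect square. -/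
/-- The denominators of the convergents of the continued fraction constructed in the
proof of Theorem 2(a) are perfect squares: with `v_{-1} = 0`, `v 0 = 1`,
`v (m+1) = r m * (v m)² + v (m-1)`, `a 0 = 1`, `a (m+1) = (r m)² (v m)² + 2 r m v (m-1)`,
`q_{-1} = 0`, `q 0 = 1`, `q (m+1) = a (m+1) * q m + q (m-1)`, one has `q m = (v m)²`
for all `m ≥ 0`.  (The instances of the recursions involving the index `-1` are stated
separately, with `v_{-1} = 0` and `q_{-1} = 0` substituted.) -/
theorem convergent_denominators_are_squares
    (r v a q : ℕ → ℕ) (hr : ∀ m, 0 < r m) (hr0 : r 0 = 1)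
    (hv0 : v 0 = 1) (hv1 : v 1 = r 0 * (v 0) ^ 2 + 0)
    (hv : ∀ m, 1 ≤ m → v (m + 1) = r m * (v m) ^ 2 + v (m - 1))
    (ha0 : a 0 = 1) (ha1 : a 1 = (r 0) ^ 2 * (v 0) ^ 2 + 2 * r 0 * 0)
    (ha : ∀ m, 1 ≤ m → a (m + 1) = (r m) ^ 2 * (v m) ^ 2 + 2 * (r m) * v (m - 1))
    (hq0 : q 0 = 1) (hq1 : q 1 = a 1 * q 0 + 0)
    (hq : ∀ m, 1 ≤ m → q (m + 1) = a (m + 1) * q m + q (m - 1)) :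
    ∀ m : ℕ, q m = (v m) ^ 2 := by
  intro m
  induction m using Nat.twoStepInduction with
  | zero => simp [hq0, hv0]
  | one => rw [hq1, ha1, hq0, hv1, hv0]; ring
  | more n ih1 ih2 =>
    have h1 := hq (n + 1) (by omega)
    have h2 := ha (n + 1) (by omega)
    have h3 := hv (n + 1) (by omega)
    simp only [Nat.add_sub_cancel] at h1 h2 h3
    rw [h1, h2, h3, ih1, ih2]
    ring
end
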